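/- Let n ∈ ℝ, n ≠ 1, k_n = n − 1, and k₀ ∈ ℝ. Consider the Kepler-type Hamiltonian H_nc = T_n + k₀ r^{n−1} on Ω = {r > 0}. Then the three functions J₁ = p_φ, J₂ = P₂ p_φ − k₀ cos(k_n φ) and J₃ = P₁ p_φ + k₀ sin(k_n φ) are constants of motion: {J₁, H_nc} = 0, {J₂, H_nc} = 0 and {J₃, H_nc} = 0 at every point of Ω. (J₂ and J₃ are the two components of a Laplace–Runge–Lenz-type vector for the position-dependent mass m_n = 1/r^{2n}.) -/

import Mathlib

open Real

/-- Canonical Poisson bracket on the phase space Ω ⊆ ℝ⁴ with coordinates (r, φ, p_r, p_φ):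
{F,G} = F_r G_{p_r} − F_{p_r} G_r + F_φ G_{p_φ} − F_{p_φ} G_φ. -/
noncomputable def pb (F G : ℝ → ℝ → ℝ → ℝ → ℝ) (r φ pr pφ : ℝ) : ℝ :=
  (deriv (fun x => F x φ pr pφ) r) * (deriv (fun x => G r φ x pφ) pr)
    - (deriv (fun x => F r φ x pφ) pr) * (deriv (fun x => G x φ pr pφ) r)
    + (deriv (fun x => F r x pr pφ) φ) * (deriv (fun x => G r φ pr x) pφ)
    - (deriv (fun x => F r φ pr x) pφ) * (deriv (fun x => G r x pr pφ) φ)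

/-- Kinetic Hamiltonian T_n = (1/2) r^(2n) (p_r² + p_φ²/r²) of the
position dependent mass m_n = 1/r^(2n). -/
noncomputable def Tkin (n : ℝ) (r φ pr pφ : ℝ) : ℝ :=
  (1/2) * r ^ (2*n) * (pr^2 + pφ^2 / r^2)

/-- Noether momentum P₁ = rⁿ (p_r cos(k_n φ) + (p_φ/r) sin(k_n φ)), k_n = n − 1. -/
noncomputable def P1 (n : ℝ) (r φ pr pφ : ℝ) : ℝ :=
  r ^ n * (pr * cos ((n-1)*φ) + (pφ / r) * sin ((n-1)*φ))

/-- Noether momentum P₂ = rⁿ (p_r sin(k_n φ) − (p_φ/r) cos(k_n φ)), k_n = n − 1. -/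
noncomputable def P2 (n : ℝ) (r φ pr pφ : ℝ) : ℝ :=
  r ^ n * (pr * sin ((n-1)*φ) - (pφ / r) * cos ((n-1)*φ))

/-- The Kepler-type Hamiltonian H_nc = T_n + k₀ r^(n−1). -/
noncomputable def Hnc (n k0 : ℝ) (r φ pr pφ : ℝ) : ℝ :=
  Tkin n r φ pr pφ + k0 * r ^ (n-1)

/-!
`H_nc` does not depend on `φ`, so `p_φ` is conserved. `J₃` and `J₂` are the members `θ = 0` and
`θ = -π/2` of the family `rungeLenz θ = P_θ p_φ + k₀ sin(k_n φ + θ)` with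
`P_θ = rⁿ (p_r cos(k_n φ + θ) + (p_φ/r) sin(k_n φ + θ))`, so one computation covers both: once
`r^(2n) = (rⁿ)²` and `r^(n-1) = rⁿ/r`, the bracket `{rungeLenz θ, H_nc}` built from the partial
derivatives is a rational expression in `r`, `rⁿ`, the momenta and `cos, sin (k_n φ + θ)` that
vanishes identically.
-/

theorem pb_eq_of_hasDerivAt {F G : ℝ → ℝ → ℝ → ℝ → ℝ} {r φ pr pφ : ℝ}
    {Fr Fφ Fpr Fpφ Gr Gφ Gpr Gpφ : ℝ}
    (hFr : HasDerivAt (fun x => F x φ pr pφ) Fr r)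
    (hFφ : HasDerivAt (fun x => F r x pr pφ) Fφ φ)
    (hFpr : HasDerivAt (fun x => F r φ x pφ) Fpr pr)
    (hFpφ : HasDerivAt (fun x => F r φ pr x) Fpφ pφ)
    (hGr : HasDerivAt (fun x => G x φ pr pφ) Gr r)
    (hGφ : HasDerivAt (fun x => G r x pr pφ) Gφ φ)
    (hGpr : HasDerivAt (fun x => G r φ x pφ) Gpr pr)
    (hGpφ : HasDerivAt (fun x => G r φ pr x) Gpφ pφ) :
    pb F G r φ pr pφ = Fr * Gpr - Fpr * Gr + Fφ * Gpφ - Fpφ * Gφ := by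
  rw [pb, hFr.deriv, hFφ.deriv, hFpr.deriv, hFpφ.deriv, hGr.deriv, hGφ.deriv, hGpr.deriv,
    hGpφ.deriv]

theorem pb_pφ_eq_neg_deriv (G : ℝ → ℝ → ℝ → ℝ → ℝ) (r φ pr pφ : ℝ) :
    pb (fun _ _ _ p => p) G r φ pr pφ = -deriv (fun x => G r x pr pφ) φ := by
  simp [pb]

theorem Real.rpow_two_mul_eq_sq {r : ℝ} (hr : 0 ≤ r) (n : ℝ) : r ^ (2 * n) = (r ^ n) ^ 2 := by
  rw [mul_comm, Real.rpow_mul hr, Real.rpow_two]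

section Hamiltonian

variable {n k0 r φ pr pφ : ℝ}

theorem hasDerivAt_Hnc_r (hr : 0 < r) :
    HasDerivAt (fun x => Hnc n k0 x φ pr pφ)
      ((r ^ n) ^ 2 * (n * pr ^ 2 + (n - 1) * pφ ^ 2 / r ^ 2) / r + k0 * (n - 1) * r ^ n / r ^ 2)
      r := by
  have h2n : HasDerivAt (fun x : ℝ => x ^ (2 * n)) (2 * n * r ^ (2 * n - 1)) r :=
    Real.hasDerivAt_rpow_const (Or.inl hr.ne')
  have hn1 : HasDerivAt (fun x : ℝ => x ^ (n - 1)) ((n - 1) * r ^ (n - 1 - 1)) r :=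
    Real.hasDerivAt_rpow_const (Or.inl hr.ne')
  have hsq : HasDerivAt (fun x : ℝ => x ^ 2) (2 * r) r := by simpa using hasDerivAt_pow 2 r
  have hinv : HasDerivAt (fun x : ℝ => pφ ^ 2 / x ^ 2)
      ((0 * r ^ 2 - pφ ^ 2 * (2 * r)) / (r ^ 2) ^ 2) r :=
    (hasDerivAt_const r (pφ ^ 2)).div hsq (pow_ne_zero 2 hr.ne')
  refine (((h2n.const_mul (1 / 2)).mul (hinv.const_add (pr ^ 2))).add
    (hn1.const_mul k0)).congr_deriv ?_
  rw [Real.rpow_sub hr, Real.rpow_sub hr, Real.rpow_sub hr, Real.rpow_two_mul_eq_sq hr.le,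
    Real.rpow_one]
  field_simp
  ring

theorem hasDerivAt_Hnc_φ : HasDerivAt (fun x => Hnc n k0 r x pr pφ) 0 φ := by
  unfold Hnc Tkin
  exact hasDerivAt_const φ _

theorem hasDerivAt_Hnc_pr (hr : 0 < r) :
    HasDerivAt (fun x => Hnc n k0 r φ x pφ) ((r ^ n) ^ 2 * pr) pr := by
  have hsq : HasDerivAt (fun x : ℝ => x ^ 2) (2 * pr) pr := by simpa using hasDerivAt_pow 2 pr
  refine (((hsq.add_const (pφ ^ 2 / r ^ 2)).const_mul (1 / 2 * r ^ (2 * n))).add_const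
    (k0 * r ^ (n - 1))).congr_deriv ?_
  rw [Real.rpow_two_mul_eq_sq hr.le]
  ring

theorem hasDerivAt_Hnc_pφ (hr : 0 < r) :
    HasDerivAt (fun x => Hnc n k0 r φ pr x) ((r ^ n) ^ 2 * pφ / r ^ 2) pφ := by
  have hsq : HasDerivAt (fun x : ℝ => x ^ 2 / r ^ 2) (2 * pφ / r ^ 2) pφ := by
    simpa using (hasDerivAt_pow 2 pφ).div_const (r ^ 2)
  refine (((hsq.const_add (pr ^ 2)).const_mul (1 / 2 * r ^ (2 * n))).add_const
    (k0 * r ^ (n - 1))).congr_deriv ?_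
  rw [Real.rpow_two_mul_eq_sq hr.le]
  ring

end Hamiltonian

noncomputable def rungeLenz (n k0 θ : ℝ) (r φ pr pφ : ℝ) : ℝ :=
  r ^ n * (pr * cos ((n - 1) * φ + θ) + pφ / r * sin ((n - 1) * φ + θ)) * pφ
    + k0 * sin ((n - 1) * φ + θ)

section RungeLenz

variable {n k0 θ r φ pr pφ : ℝ}

theorem hasDerivAt_rungeLenz_r (hr : 0 < r) :
    HasDerivAt (fun x => rungeLenz n k0 θ x φ pr pφ)
      ((n * r ^ n / r * (pr * cos ((n - 1) * φ + θ) + pφ / r * sin ((n - 1) * φ + θ))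
        - r ^ n * pφ / r ^ 2 * sin ((n - 1) * φ + θ)) * pφ) r := by
  have hrn : HasDerivAt (fun x : ℝ => x ^ n) (n * r ^ (n - 1)) r :=
    Real.hasDerivAt_rpow_const (Or.inl hr.ne')
  have hdiv : HasDerivAt (fun x : ℝ => pφ / x) ((0 * r - pφ * 1) / r ^ 2) r :=
    (hasDerivAt_const r pφ).div (hasDerivAt_id r) hr.ne'
  refine (((hrn.mul ((hdiv.mul_const (sin ((n - 1) * φ + θ))).const_add
    (pr * cos ((n - 1) * φ + θ)))).mul_const pφ).add_const
    (k0 * sin ((n - 1) * φ + θ))).congr_deriv ?_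
  rw [Real.rpow_sub_one hr.ne']
  ring

theorem hasDerivAt_rungeLenz_φ :
    HasDerivAt (fun x => rungeLenz n k0 θ r x pr pφ)
      ((n - 1) * ((r ^ n * (pφ / r * cos ((n - 1) * φ + θ) - pr * sin ((n - 1) * φ + θ))) * pφ
        + k0 * cos ((n - 1) * φ + θ))) φ := by
  have harg : HasDerivAt (fun x : ℝ => (n - 1) * x + θ) (n - 1) φ := by
    simpa using ((hasDerivAt_id φ).const_mul (n - 1)).add_const θ
  have hsin := (Real.hasDerivAt_sin ((n - 1) * φ + θ)).comp φ harg
  have hcos := (Real.hasDerivAt_cos ((n - 1) * φ + θ)).comp φ harg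
  refine (((((hcos.const_mul pr).add (hsin.const_mul (pφ / r))).const_mul (r ^ n)).mul_const
    pφ).add (hsin.const_mul k0)).congr_deriv ?_
  ring

theorem hasDerivAt_rungeLenz_pr :
    HasDerivAt (fun x => rungeLenz n k0 θ r φ x pφ) (r ^ n * cos ((n - 1) * φ + θ) * pφ) pr := by
  refine (((((hasDerivAt_id pr).mul_const (cos ((n - 1) * φ + θ))).add_const
    (pφ / r * sin ((n - 1) * φ + θ))).const_mul (r ^ n)).mul_const pφ).add_const
    (k0 * sin ((n - 1) * φ + θ)) |>.congr_deriv ?_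
  ring

theorem hasDerivAt_rungeLenz_pφ :
    HasDerivAt (fun x => rungeLenz n k0 θ r φ pr x)
      (r ^ n * (pr * cos ((n - 1) * φ + θ) + 2 * pφ / r * sin ((n - 1) * φ + θ))) pφ := by
  refine ((((((hasDerivAt_id pφ).div_const r).mul_const (sin ((n - 1) * φ + θ))).const_add
    (pr * cos ((n - 1) * φ + θ))).const_mul (r ^ n)).mul (hasDerivAt_id pφ)).add_const
    (k0 * sin ((n - 1) * φ + θ)) |>.congr_deriv ?_
  simp only [id]
  ring

theorem pb_rungeLenz_Hnc (hr : 0 < r) : pb (rungeLenz n k0 θ) (Hnc n k0) r φ pr pφ = 0 := by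
  rw [pb_eq_of_hasDerivAt (hasDerivAt_rungeLenz_r hr) hasDerivAt_rungeLenz_φ
    hasDerivAt_rungeLenz_pr hasDerivAt_rungeLenz_pφ (hasDerivAt_Hnc_r hr) hasDerivAt_Hnc_φ
    (hasDerivAt_Hnc_pr hr) (hasDerivAt_Hnc_pφ hr)]
  field_simp
  ring

end RungeLenz

theorem Hnc_superintegrable_general (n k0 : ℝ) :
    ∀ r φ pr pφ : ℝ, 0 < r →
      pb (fun _ _ _ p => p) (Hnc n k0) r φ pr pφ = 0 ∧
      pb (fun r φ pr pφ => P2 n r φ pr pφ * pφ - k0 * cos ((n-1)*φ))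
         (Hnc n k0) r φ pr pφ = 0 ∧
      pb (fun r φ pr pφ => P1 n r φ pr pφ * pφ + k0 * sin ((n-1)*φ))
         (Hnc n k0) r φ pr pφ = 0 := by
  intro r φ pr pφ hr
  have hJ₂ : (fun r φ pr pφ => P2 n r φ pr pφ * pφ - k0 * cos ((n-1)*φ)) =
      rungeLenz n k0 (-(π / 2)) := by
    funext r φ pr pφ
    simp only [P2, rungeLenz, ← sub_eq_add_neg, cos_sub_pi_div_two, sin_sub_pi_div_two]
    ring
  have hJ₃ : (fun r φ pr pφ => P1 n r φ pr pφ * pφ + k0 * sin ((n-1)*φ)) =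
      rungeLenz n k0 0 := by
    funext r φ pr pφ
    simp only [P1, rungeLenz, add_zero]
  refine ⟨?_, hJ₂ ▸ pb_rungeLenz_Hnc hr, hJ₃ ▸ pb_rungeLenz_Hnc hr⟩
  rw [pb_pφ_eq_neg_deriv, hasDerivAt_Hnc_φ.deriv, neg_zero]

/-- J₁ = p_φ and the Runge–Lenz-type functions J₂ = P₂ p_φ − k₀ cos(k_n φ),
J₃ = P₁ p_φ + k₀ sin(k_n φ) are constants of motion of H_nc on Ω = {r > 0}. -/
theorem Hnc_superintegrable (n k0 : ℝ) (hn : n ≠ 1) :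
    ∀ r φ pr pφ : ℝ, 0 < r →
      pb (fun _ _ _ p => p) (Hnc n k0) r φ pr pφ = 0 ∧
      pb (fun r φ pr pφ => P2 n r φ pr pφ * pφ - k0 * cos ((n-1)*φ))
         (Hnc n k0) r φ pr pφ = 0 ∧
      pb (fun r φ pr pφ => P1 n r φ pr pφ * pφ + k0 * sin ((n-1)*φ))
         (Hnc n k0) r φ pr pφ = 0 :=
  Hnc_superintegrable_general n k0
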